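/- Let f : ℝ² → ℝ be a C² function which is bounded, has bounded second partial derivatives, and converges to a limit L ∈ ℝ as ‖x‖ → ∞. Let ε₀ > 0 and let u be a bounded continuous function on the closed slab {(z, x₂, x₃) ∈ ℝ³ : 0 ≤ z ≤ ε₀} which is C² on the open slab {0 < z < ε₀}, satisfies the hyperbolic-harmonicity equation z·(∂²_z u + ∂²_{x₂} u + ∂²_{x₃} u) = ∂_z u on the open slab, satisfies the boundary condition u(0, x₂, x₃) = f(x₂, x₃) for all (x₂, x₃) ∈ ℝ², satisfies inf_{ℝ²} f ≤ u ≤ sup_{ℝ²} f on the slab, and satisfies u(z, x₂, x₃) − f(x₂, x₃) → 0 as ‖(x₂, x₃)‖ → ∞, uniformly in z ∈ [0, ε₀]. Then there exist ε ∈ (0, ε₀] and C > 0 such that |u(z, x₂, x₃) − f(x₂, x₃)| ≤ C·z for all 0 ≤ z ≤ ε and all (x₂, x₃) ∈ ℝ². Equivalently, u = f + z·v on the slab {0 ≤ z ≤ ε} for some bounded function v. -/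

import Mathlib

/-- Partial derivative of a curried function `u : ℝ → ℝ → ℝ → ℝ` in the first
variable. -/
noncomputable def pd1 (u : ℝ → ℝ → ℝ → ℝ) (z x y : ℝ) : ℝ :=
  deriv (fun t => u t x y) z

/-- Partial derivative in the second variable. -/
noncomputable def pd2 (u : ℝ → ℝ → ℝ → ℝ) (z x y : ℝ) : ℝ :=
  deriv (fun t => u z t y) x

/-- Partial derivative in the third variable. -/
noncomputable def pd3 (u : ℝ → ℝ → ℝ → ℝ) (z x y : ℝ) : ℝ :=
  deriv (fun t => u z x t) y

/-- Partial derivative of a curried function `f : ℝ → ℝ → ℝ` in the first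
variable. -/
noncomputable def qd1 (f : ℝ → ℝ → ℝ) (x y : ℝ) : ℝ :=
  deriv (fun t => f t y) x

/-- Partial derivative in the second variable. -/
noncomputable def qd2 (f : ℝ → ℝ → ℝ) (x y : ℝ) : ℝ :=
  deriv (fun t => f x t) y

/-!
Barrier argument. Put `h = u - f - C z` on the slab `0 ≤ z ≤ ε`. It vanishes at `z = 0`, is
`≤ 0` at `z = ε` once `C ε` bounds `|u - f|`, and is small for large `(x₂, x₃)` by the uniform
decay, so a positive value of `h` forces an interior maximum. There `∂_z u = C`, `∂²_z u ≤ 0` and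
`∂²_{x_i} u ≤ ∂²_{x_i} f ≤ K`, so the equation gives `C = z Δu ≤ 2 K z < C` as soon as
`C > 2 K ε`. The same argument for `-u, -f` bounds `f - u`.
-/

open Set Filter Topology

theorem IsLocalMax.deriv_deriv_nonpos {g : ℝ → ℝ} {a : ℝ} (hmax : IsLocalMax g a)
    (hc : ContinuousAt g a) : deriv (deriv g) a ≤ 0 := by
  by_contra! hpos
  -- a strict second-derivative test would make `a` a local minimum too, so `g` is locally constant
  have hmin : IsLocalMin g a := isLocalMin_of_deriv_deriv_pos hpos hmax.deriv_eq_zero hc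
  have hconst : g =ᶠ[𝓝 a] fun _ => g a := (hmin.and hmax).mono fun t ht => le_antisymm ht.2 ht.1
  have : deriv g =ᶠ[𝓝 a] fun _ => 0 := by
    filter_upwards [hconst.eventuallyEq_nhds] with t ht
    rw [ht.deriv_eq, deriv_const]
  rw [this.deriv_eq, deriv_const] at hpos
  exact lt_irrefl _ hpos

theorem deriv_deriv_le_of_isLocalMax_sub {g φ : ℝ → ℝ} {a : ℝ} (hg : ContDiffAt ℝ 2 g a)
    (hφ : ContDiffAt ℝ 2 φ a) (hmax : IsLocalMax (fun t => g t - φ t) a) :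
    deriv (deriv g) a ≤ deriv (deriv φ) a := by
  have hderiv : deriv (fun t => g t - φ t) =ᶠ[𝓝 a] fun t => deriv g t - deriv φ t := by
    filter_upwards [hg.eventually (by simp), hφ.eventually (by simp)] with t hgt hφt
    exact deriv_fun_sub (hgt.differentiableAt two_ne_zero) (hφt.differentiableAt two_ne_zero)
  have h := hmax.deriv_deriv_nonpos (hg.continuousAt.sub hφ.continuousAt)
  rwa [hderiv.deriv_eq,
    deriv_fun_sub ((hg.derivWithin (m := 1) le_rfl).differentiableAt one_ne_zero)
      ((hφ.derivWithin (m := 1) le_rfl).differentiableAt one_ne_zero), sub_nonpos] at h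

theorem le_two_mul_of_isLocalMax_sub_barrier {u : ℝ → ℝ → ℝ → ℝ} {f : ℝ → ℝ → ℝ}
    {C K z₀ x₀ y₀ : ℝ} (hz₀ : 0 ≤ z₀)
    (hu : ContDiffAt ℝ 2 (fun p : ℝ × ℝ × ℝ => u p.1 p.2.1 p.2.2) (z₀, x₀, y₀))
    (hf : ContDiffAt ℝ 2 (fun q : ℝ × ℝ => f q.1 q.2) (x₀, y₀))
    (hfxx : qd1 (qd1 f) x₀ y₀ ≤ K) (hfyy : qd2 (qd2 f) x₀ y₀ ≤ K)
    (hharm : z₀ * (pd1 (pd1 u) z₀ x₀ y₀ + pd2 (pd2 u) z₀ x₀ y₀ + pd3 (pd3 u) z₀ x₀ y₀)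
      = pd1 u z₀ x₀ y₀)
    (hmax : IsLocalMax (fun p : ℝ × ℝ × ℝ => u p.1 p.2.1 p.2.2 - (f p.2.1 p.2.2 + C * p.1))
      (z₀, x₀, y₀)) :
    C ≤ 2 * K * z₀ := by
  have hmaxz : IsLocalMax (fun t => u t x₀ y₀ - (f x₀ y₀ + C * t)) z₀ :=
    hmax.comp_continuous (g := fun t : ℝ => (t, x₀, y₀)) (by fun_prop)
  have hmaxx : IsLocalMax (fun t => u z₀ t y₀ - (f t y₀ + C * z₀)) x₀ :=
    hmax.comp_continuous (g := fun t : ℝ => (z₀, t, y₀)) (by fun_prop)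
  have hmaxy : IsLocalMax (fun t => u z₀ x₀ t - (f x₀ t + C * z₀)) y₀ :=
    hmax.comp_continuous (g := fun t : ℝ => (z₀, x₀, t)) (by fun_prop)
  have huz : ContDiffAt ℝ 2 (fun t => u t x₀ y₀) z₀ :=
    hu.comp z₀ (contDiffAt_id.prodMk contDiffAt_const)
  have hux : ContDiffAt ℝ 2 (fun t => u z₀ t y₀) x₀ :=
    hu.comp x₀ (contDiffAt_const.prodMk (contDiffAt_id.prodMk contDiffAt_const))
  have huy : ContDiffAt ℝ 2 (fun t => u z₀ x₀ t) y₀ :=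
    hu.comp (f := fun t : ℝ => (z₀, x₀, t)) y₀
      (contDiffAt_const.prodMk (contDiffAt_const.prodMk contDiffAt_id))
  have hfx : ContDiffAt ℝ 2 (fun t => f t y₀) x₀ :=
    hf.comp x₀ (contDiffAt_id.prodMk contDiffAt_const)
  have hfy : ContDiffAt ℝ 2 (fun t => f x₀ t) y₀ :=
    hf.comp y₀ (contDiffAt_const.prodMk contDiffAt_id)
  have hslope : pd1 u z₀ x₀ y₀ = C := by
    have := hmaxz.deriv_eq_zero
    rw [deriv_fun_sub (huz.differentiableAt two_ne_zero) (by fun_prop)] at this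
    simpa [pd1, sub_eq_zero] using this
  have huzz : pd1 (pd1 u) z₀ x₀ y₀ ≤ 0 := by
    simpa [pd1] using deriv_deriv_le_of_isLocalMax_sub huz (by fun_prop) hmaxz
  have huxx : pd2 (pd2 u) z₀ x₀ y₀ ≤ K := by
    have := deriv_deriv_le_of_isLocalMax_sub hux (by fun_prop) hmaxx
    rw [deriv_add_const'] at this
    exact this.trans hfxx
  have huyy : pd3 (pd3 u) z₀ x₀ y₀ ≤ K := by
    have := deriv_deriv_le_of_isLocalMax_sub huy (by fun_prop) hmaxy
    rw [deriv_add_const'] at this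
    exact this.trans hfyy
  rw [← hslope, ← hharm]
  nlinarith

@[simp] lemma pd1_neg (u : ℝ → ℝ → ℝ → ℝ) :
    pd1 (fun z x y => -u z x y) = fun z x y => -pd1 u z x y := by
  funext z x y; simp [pd1]

@[simp] lemma pd2_neg (u : ℝ → ℝ → ℝ → ℝ) :
    pd2 (fun z x y => -u z x y) = fun z x y => -pd2 u z x y := by
  funext z x y; simp [pd2]

@[simp] lemma pd3_neg (u : ℝ → ℝ → ℝ → ℝ) :
    pd3 (fun z x y => -u z x y) = fun z x y => -pd3 u z x y := by
  funext z x y; simp [pd3]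

@[simp] lemma qd1_neg (f : ℝ → ℝ → ℝ) : qd1 (fun x y => -f x y) = fun x y => -qd1 f x y := by
  funext x y; simp [qd1]

@[simp] lemma qd2_neg (f : ℝ → ℝ → ℝ) : qd2 (fun x y => -f x y) = fun x y => -qd2 f x y := by
  funext x y; simp [qd2]

lemma sq_le_sq_add_sq_of_notMem_box {R x y : ℝ}
    (h : (x, y) ∉ Icc (-|R|) |R| ×ˢ Icc (-|R|) |R|) : R ^ 2 ≤ x ^ 2 + y ^ 2 := by
  rw [mem_prod, mem_Icc, mem_Icc, ← abs_le, ← abs_le, not_and_or, not_le, not_le] at h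
  rcases h with h | h
  · nlinarith [sq_abs x, sq_abs R, abs_nonneg R, sq_nonneg y]
  · nlinarith [sq_abs y, sq_abs R, abs_nonneg R, sq_nonneg x]

theorem exists_isMaxOn_slab {h : ℝ × ℝ × ℝ → ℝ} {ε R : ℝ}
    (hc : ContinuousOn h (Prod.fst ⁻¹' Icc 0 ε)) {p₁ : ℝ × ℝ × ℝ}
    (hp₁ : p₁ ∈ Prod.fst ⁻¹' Icc 0 ε)
    (hfar : ∀ p ∈ Prod.fst ⁻¹' Icc 0 ε, R ^ 2 ≤ p.2.1 ^ 2 + p.2.2 ^ 2 → h p ≤ h p₁) :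
    ∃ p₀ ∈ Prod.fst ⁻¹' Icc 0 ε, IsMaxOn h (Prod.fst ⁻¹' Icc 0 ε) p₀ := by
  refine hc.exists_isMaxOn' (isClosed_Icc.preimage continuous_fst) hp₁ ?_
  rw [(hasBasis_cocompact.inf_principal _).eventually_iff]
  refine ⟨Icc 0 ε ×ˢ Icc (-|R|) |R| ×ˢ Icc (-|R|) |R|,
    isCompact_Icc.prod (isCompact_Icc.prod isCompact_Icc), ?_⟩
  rintro ⟨z, x, y⟩ ⟨hbox, hz⟩
  exact hfar _ hz (sq_le_sq_add_sq_of_notMem_box fun hxy => hbox ⟨hz, hxy⟩)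

theorem sub_le_mul_of_harmonic {f : ℝ → ℝ → ℝ} {u : ℝ → ℝ → ℝ → ℝ} {ε K B C : ℝ}
    (hK : 0 ≤ K) (hKC : 2 * K * ε < C) (hBC : B ≤ C * ε)
    (hf : ContDiff ℝ 2 (fun q : ℝ × ℝ => f q.1 q.2))
    (hfxx : ∀ x y, qd1 (qd1 f) x y ≤ K) (hfyy : ∀ x y, qd2 (qd2 f) x y ≤ K)
    (hucont : ContinuousOn (fun p : ℝ × ℝ × ℝ => u p.1 p.2.1 p.2.2) (Prod.fst ⁻¹' Icc 0 ε))
    (huC2 : ContDiffOn ℝ 2 (fun p : ℝ × ℝ × ℝ => u p.1 p.2.1 p.2.2) (Prod.fst ⁻¹' Ioo 0 ε))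
    (hharm : ∀ z x y, 0 < z → z < ε →
      z * (pd1 (pd1 u) z x y + pd2 (pd2 u) z x y + pd3 (pd3 u) z x y) = pd1 u z x y)
    (hbc : ∀ x y, u 0 x y = f x y)
    (hB : ∀ z x y, 0 ≤ z → z ≤ ε → u z x y - f x y ≤ B)
    (hdecay : ∀ δ, 0 < δ → ∃ R : ℝ, ∀ z x y, 0 ≤ z → z ≤ ε → R ^ 2 ≤ x ^ 2 + y ^ 2 →
      u z x y - f x y ≤ δ) :
    ∀ z x y, 0 ≤ z → z ≤ ε → u z x y - f x y ≤ C * z := by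
  by_contra! ⟨z₁, x₁, y₁, hz₁, hz₁ε, hbad⟩
  set h : ℝ × ℝ × ℝ → ℝ := fun p => u p.1 p.2.1 p.2.2 - (f p.2.1 p.2.2 + C * p.1) with h_def
  have hC : 0 ≤ C := by nlinarith
  have hh₁ : 0 < h (z₁, x₁, y₁) := by simp only [h_def]; linarith
  obtain ⟨R, hR⟩ := hdecay _ hh₁
  have hhcont : ContinuousOn h (Prod.fst ⁻¹' Icc 0 ε) :=
    hucont.sub ((hf.continuous.comp (by fun_prop)).add (by fun_prop)).continuousOn
  have hfar : ∀ p ∈ Prod.fst ⁻¹' Icc 0 ε, R ^ 2 ≤ p.2.1 ^ 2 + p.2.2 ^ 2 →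
      h p ≤ h (z₁, x₁, y₁) := fun p hp hpR => by
    have := hR p.1 p.2.1 p.2.2 hp.1 hp.2 hpR
    have := mul_nonneg hC hp.1
    change u p.1 p.2.1 p.2.2 - (f p.2.1 p.2.2 + C * p.1) ≤ _
    linarith
  obtain ⟨⟨z₀, x₀, y₀⟩, hp₀, hmax⟩ := exists_isMaxOn_slab hhcont ⟨hz₁, hz₁ε⟩ hfar
  obtain ⟨hz₀, hz₀ε⟩ : 0 ≤ z₀ ∧ z₀ ≤ ε := hp₀
  have hh₀ : 0 < h (z₀, x₀, y₀) := hh₁.trans_le (hmax ⟨hz₁, hz₁ε⟩)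
  have hz₀pos : 0 < z₀ := by
    refine hz₀.lt_of_ne fun hz => ?_
    subst hz
    simp [h_def, hbc] at hh₀
  have hz₀lt : z₀ < ε := by
    refine hz₀ε.lt_of_ne fun hz => ?_
    have := hB z₀ x₀ y₀ hz₀ hz₀ε
    subst hz
    simp only [h_def] at hh₀
    linarith
  have hopen : Prod.fst ⁻¹' Ioo 0 ε ∈ 𝓝 (z₀, x₀, y₀) :=
    (isOpen_Ioo.preimage continuous_fst).mem_nhds ⟨hz₀pos, hz₀lt⟩
  have hslab : Prod.fst ⁻¹' Icc 0 ε ∈ 𝓝 (z₀, x₀, y₀) :=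
    mem_of_superset hopen fun p hp => Ioo_subset_Icc_self hp
  have hCle := le_two_mul_of_isLocalMax_sub_barrier hz₀pos.le (huC2.contDiffAt hopen)
    hf.contDiffAt (hfxx x₀ y₀) (hfyy x₀ y₀) (hharm z₀ x₀ y₀ hz₀pos hz₀lt)
    (hmax.isLocalMax hslab)
  nlinarith

theorem abs_sub_le_mul_of_harmonic {f : ℝ → ℝ → ℝ} {u : ℝ → ℝ → ℝ → ℝ} {ε K B C : ℝ}
    (hKC : 2 * K * ε < C) (hBC : B ≤ C * ε)
    (hf : ContDiff ℝ 2 (fun q : ℝ × ℝ => f q.1 q.2))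
    (hfxx : ∀ x y, |qd1 (qd1 f) x y| ≤ K) (hfyy : ∀ x y, |qd2 (qd2 f) x y| ≤ K)
    (hucont : ContinuousOn (fun p : ℝ × ℝ × ℝ => u p.1 p.2.1 p.2.2) (Prod.fst ⁻¹' Icc 0 ε))
    (huC2 : ContDiffOn ℝ 2 (fun p : ℝ × ℝ × ℝ => u p.1 p.2.1 p.2.2) (Prod.fst ⁻¹' Ioo 0 ε))
    (hharm : ∀ z x y, 0 < z → z < ε →
      z * (pd1 (pd1 u) z x y + pd2 (pd2 u) z x y + pd3 (pd3 u) z x y) = pd1 u z x y)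
    (hbc : ∀ x y, u 0 x y = f x y)
    (hB : ∀ z x y, 0 ≤ z → z ≤ ε → |u z x y - f x y| ≤ B)
    (hdecay : ∀ δ, 0 < δ → ∃ R : ℝ, ∀ z x y, 0 ≤ z → z ≤ ε → R ^ 2 ≤ x ^ 2 + y ^ 2 →
      |u z x y - f x y| ≤ δ) :
    ∀ z x y, 0 ≤ z → z ≤ ε → |u z x y - f x y| ≤ C * z := by
  have hK : 0 ≤ K := (abs_nonneg _).trans (hfxx 0 0)
  have hupper := sub_le_mul_of_harmonic hK hKC hBC hf (fun x y => (abs_le.mp (hfxx x y)).2)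
    (fun x y => (abs_le.mp (hfyy x y)).2) hucont huC2 hharm hbc
    (fun z x y hz hzε => (abs_le.mp (hB z x y hz hzε)).2)
    fun δ hδ => (hdecay δ hδ).imp fun R hR z x y hz hzε hxy => (abs_le.mp (hR z x y hz hzε hxy)).2
  have hlower := sub_le_mul_of_harmonic (f := fun x y => -f x y) (u := fun z x y => -u z x y)
    hK hKC hBC hf.neg (fun x y => by simpa using (neg_le_abs _).trans (hfxx x y))
    (fun x y => by simpa using (neg_le_abs _).trans (hfyy x y)) hucont.neg huC2.neg
    (fun z x y hz hzε => by simp only [pd1_neg, pd2_neg, pd3_neg]; linarith [hharm z x y hz hzε])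
    (by simpa using hbc)
    (fun z x y hz hzε => by linarith [(abs_le.mp (hB z x y hz hzε)).1])
    fun δ hδ => (hdecay δ hδ).imp fun R hR z x y hz hzε hxy => by
      linarith [(abs_le.mp (hR z x y hz hzε hxy)).1]
  intro z x y hz hzε
  rw [abs_le]
  constructor
  · linarith [hlower z x y hz hzε]
  · exact hupper z x y hz hzε

theorem boundary_expansion_of_harmonic_general
    (f : ℝ → ℝ → ℝ)
    (hfC2 : ContDiff ℝ 2 (fun p : ℝ × ℝ => f p.1 p.2))
    (hfbdd : ∃ M : ℝ, ∀ x y : ℝ, |f x y| ≤ M)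
    (hfsecond : ∃ K : ℝ, ∀ x y : ℝ,
      |qd1 (qd1 f) x y| ≤ K ∧ |qd1 (qd2 f) x y| ≤ K ∧ |qd2 (qd2 f) x y| ≤ K)
    (ε₀ : ℝ) (hε₀ : 0 < ε₀)
    (u : ℝ → ℝ → ℝ → ℝ)
    (hubdd : ∃ M : ℝ, ∀ z x y : ℝ, 0 ≤ z → z ≤ ε₀ → |u z x y| ≤ M)
    (hucont : ContinuousOn (fun p : ℝ × ℝ × ℝ => u p.1 p.2.1 p.2.2)
      {p : ℝ × ℝ × ℝ | 0 ≤ p.1 ∧ p.1 ≤ ε₀})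
    (huC2 : ContDiffOn ℝ 2 (fun p : ℝ × ℝ × ℝ => u p.1 p.2.1 p.2.2)
      {p : ℝ × ℝ × ℝ | 0 < p.1 ∧ p.1 < ε₀})
    (hharm : ∀ z x y : ℝ, 0 < z → z < ε₀ →
      z * (pd1 (pd1 u) z x y + pd2 (pd2 u) z x y + pd3 (pd3 u) z x y)
        = pd1 u z x y)
    (hbc : ∀ x y : ℝ, u 0 x y = f x y)
    (hdecay : ∀ δ : ℝ, 0 < δ → ∃ R : ℝ, ∀ z x y : ℝ,
      0 ≤ z → z ≤ ε₀ → R ^ 2 ≤ x ^ 2 + y ^ 2 → |u z x y - f x y| ≤ δ) :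
    ∃ ε : ℝ, 0 < ε ∧ ε ≤ ε₀ ∧ ∃ C : ℝ, 0 < C ∧
      ∀ z x y : ℝ, 0 ≤ z → z ≤ ε → |u z x y - f x y| ≤ C * z := by
  obtain ⟨Mf, hMf⟩ := hfbdd
  obtain ⟨K, hK⟩ := hfsecond
  obtain ⟨Mu, hMu⟩ := hubdd
  have hB : ∀ z x y, 0 ≤ z → z ≤ ε₀ → |u z x y - f x y| ≤ Mu + Mf := fun z x y hz hzε =>
    (abs_sub _ _).trans (add_le_add (hMu z x y hz hzε) (hMf x y))
  have hK₀ : 0 ≤ K := (abs_nonneg _).trans (hK 0 0).1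
  have hB₀ : 0 ≤ Mu + Mf := (abs_nonneg _).trans (hB 0 0 0 le_rfl hε₀.le)
  have hB₀' : 0 ≤ (Mu + Mf) / ε₀ := div_nonneg hB₀ hε₀.le
  refine ⟨ε₀, hε₀, le_rfl, (Mu + Mf) / ε₀ + 2 * K * ε₀ + 1, by positivity,
    abs_sub_le_mul_of_harmonic (by linarith) ?_ hfC2 (fun x y => (hK x y).1)
      (fun x y => (hK x y).2.2) hucont huC2 hharm hbc hB hdecay⟩
  rw [add_mul, add_mul, div_mul_cancel₀ _ hε₀.ne']
  have : 0 ≤ 2 * K * ε₀ * ε₀ := by positivity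
  linarith

/-- Boundary behaviour of a bounded hyperbolically harmonic function on the
slab `{0 ≤ z ≤ ε₀}` in the upper half-space model: if `f : ℝ² → ℝ` is C²,
bounded, with bounded second partial derivatives and a limit `L` at infinity,
and if `u` is bounded, continuous on the closed slab, C² on the open slab,
satisfies `z·(∂²_z u + ∂²_{x₂} u + ∂²_{x₃} u) = ∂_z u` there, has boundary
value `f` at `z = 0`, is pinched between `inf f` and `sup f`, and
`u − f → 0` uniformly in `z` as `‖(x₂,x₃)‖ → ∞`, then `|u − f| ≤ C·z` on a
smaller slab `{0 ≤ z ≤ ε}`; equivalently `u = f + z·v` with `v` bounded. -/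
theorem boundary_expansion_of_harmonic
    (f : ℝ → ℝ → ℝ) (L : ℝ)
    (hfC2 : ContDiff ℝ 2 (fun p : ℝ × ℝ => f p.1 p.2))
    (hfbdd : ∃ M : ℝ, ∀ x y : ℝ, |f x y| ≤ M)
    (hfsecond : ∃ K : ℝ, ∀ x y : ℝ,
      |qd1 (qd1 f) x y| ≤ K ∧ |qd1 (qd2 f) x y| ≤ K ∧ |qd2 (qd2 f) x y| ≤ K)
    (hflim : ∀ δ : ℝ, 0 < δ → ∃ R : ℝ, ∀ x y : ℝ,
      R ^ 2 ≤ x ^ 2 + y ^ 2 → |f x y - L| ≤ δ)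
    (ε₀ : ℝ) (hε₀ : 0 < ε₀)
    (u : ℝ → ℝ → ℝ → ℝ)
    (hubdd : ∃ M : ℝ, ∀ z x y : ℝ, 0 ≤ z → z ≤ ε₀ → |u z x y| ≤ M)
    (hucont : ContinuousOn (fun p : ℝ × ℝ × ℝ => u p.1 p.2.1 p.2.2)
      {p : ℝ × ℝ × ℝ | 0 ≤ p.1 ∧ p.1 ≤ ε₀})
    (huC2 : ContDiffOn ℝ 2 (fun p : ℝ × ℝ × ℝ => u p.1 p.2.1 p.2.2)
      {p : ℝ × ℝ × ℝ | 0 < p.1 ∧ p.1 < ε₀})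
    (hharm : ∀ z x y : ℝ, 0 < z → z < ε₀ →
      z * (pd1 (pd1 u) z x y + pd2 (pd2 u) z x y + pd3 (pd3 u) z x y)
        = pd1 u z x y)
    (hbc : ∀ x y : ℝ, u 0 x y = f x y)
    (hpinch : ∀ z x y : ℝ, 0 ≤ z → z ≤ ε₀ →
      sInf (Set.range fun p : ℝ × ℝ => f p.1 p.2) ≤ u z x y ∧
      u z x y ≤ sSup (Set.range fun p : ℝ × ℝ => f p.1 p.2))
    (hdecay : ∀ δ : ℝ, 0 < δ → ∃ R : ℝ, ∀ z x y : ℝ,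
      0 ≤ z → z ≤ ε₀ → R ^ 2 ≤ x ^ 2 + y ^ 2 → |u z x y - f x y| ≤ δ) :
    ∃ ε : ℝ, 0 < ε ∧ ε ≤ ε₀ ∧ ∃ C : ℝ, 0 < C ∧
      ∀ z x y : ℝ, 0 ≤ z → z ≤ ε → |u z x y - f x y| ≤ C * z :=
  boundary_expansion_of_harmonic_general f hfC2 hfbdd hfsecond ε₀ hε₀ u hubdd hucont huC2 hharm hbc
    hdecay
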